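/- Let U : ℕ → ℝ → ℝ → ℝ be defined by U 0 x y = 1, U 1 x y = 2x, U (2i) x y = 2y·U (2i−1) x y − U (2i−2) x y and U (2i+1) x y = 2x·U (2i) x y − U (2i−1) x y for i ≥ 1. Then for every i ∈ ℕ there exists a polynomial Q over ℤ with natural degree i and leading coefficient 4^i such that for all real x, y one has U (2i+1) x y = 2x·(Q.map (Int.cast : ℤ → ℝ)).eval (x·y). -/

import Mathlib

/-! Induction on `i` shows `U (2i) x y = P_i(xy)` and `U (2i+1) x y = 2x · Q_i(xy)` for the integer
polynomials `P_0 = Q_0 = 1`, `P_{i+1} = 4X·Q_i - P_i`, `Q_{i+1} = P_{i+1} - Q_i`. In both recursions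
the new top coefficient comes only from `4X·Q_i`, so `P_i` and `Q_i` have degree `i` and leading
coefficient `4^i`. -/

open Polynomial

mutual

noncomputable def evenPoly : ℕ → ℤ[X]
  | 0 => 1
  | n + 1 => 4 * X * oddPoly n - evenPoly n

noncomputable def oddPoly : ℕ → ℤ[X]
  | 0 => 1
  | n + 1 => 4 * X * oddPoly n - evenPoly n - oddPoly n

end

lemma natDegree_four_mul_X_mul_le {R : Type*} [Semiring R] (q : R[X]) :
    (4 * X * q).natDegree ≤ q.natDegree + 1 :=
  calc (4 * X * q).natDegree ≤ (4 * X : R[X]).natDegree + q.natDegree := natDegree_mul_le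
    _ ≤ 1 + q.natDegree := by gcongr; compute_degree
    _ = q.natDegree + 1 := add_comm _ _

lemma coeff_four_mul_X_mul_succ {R : Type*} [Semiring R] (q : R[X]) (n : ℕ) :
    (4 * X * q).coeff (n + 1) = 4 * q.coeff n := by
  simp [mul_assoc, coeff_X_mul]

lemma natDegree_le_and_coeff_evenPoly_oddPoly (i : ℕ) :
    (evenPoly i).natDegree ≤ i ∧ (evenPoly i).coeff i = 4 ^ i ∧
      (oddPoly i).natDegree ≤ i ∧ (oddPoly i).coeff i = 4 ^ i := by
  induction i with
  | zero => simp [evenPoly, oddPoly]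
  | succ n ih =>
    obtain ⟨hPdeg, hPcoeff, hQdeg, hQcoeff⟩ := ih
    have hXQdeg : (4 * X * oddPoly n).natDegree ≤ n + 1 :=
      (natDegree_four_mul_X_mul_le _).trans (by omega)
    have hP0 : (evenPoly n).coeff (n + 1) = 0 := coeff_eq_zero_of_natDegree_lt (by omega)
    have hQ0 : (oddPoly n).coeff (n + 1) = 0 := coeff_eq_zero_of_natDegree_lt (by omega)
    simp only [evenPoly, oddPoly, coeff_sub, coeff_four_mul_X_mul_succ, hQcoeff, hP0, hQ0]
    refine ⟨?_, by ring, ?_, by ring⟩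
    · exact (natDegree_sub_le _ _).trans (max_le hXQdeg (by omega))
    · exact (natDegree_sub_le _ _).trans
        (max_le ((natDegree_sub_le _ _).trans (max_le hXQdeg (by omega))) (by omega))

lemma natDegree_oddPoly (i : ℕ) : (oddPoly i).natDegree = i :=
  natDegree_eq_of_le_of_coeff_ne_zero (natDegree_le_and_coeff_evenPoly_oddPoly i).2.2.1
    (by rw [(natDegree_le_and_coeff_evenPoly_oddPoly i).2.2.2]; positivity)

lemma leadingCoeff_oddPoly (i : ℕ) : (oddPoly i).leadingCoeff = 4 ^ i := by
  rw [leadingCoeff, natDegree_oddPoly, (natDegree_le_and_coeff_evenPoly_oddPoly i).2.2.2]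

section Recurrence

variable (U : ℕ → ℝ → ℝ → ℝ)
    (hU0 : ∀ x y : ℝ, U 0 x y = 1)
    (hU1 : ∀ x y : ℝ, U 1 x y = 2 * x)
    (hUeven : ∀ i : ℕ, 1 ≤ i → ∀ x y : ℝ,
      U (2 * i) x y = 2 * y * U (2 * i - 1) x y - U (2 * i - 2) x y)
    (hUodd : ∀ i : ℕ, 1 ≤ i → ∀ x y : ℝ,
      U (2 * i + 1) x y = 2 * x * U (2 * i) x y - U (2 * i - 1) x y)
include hU0 hU1 hUeven hUodd

lemma eq_eval_evenPoly_and_eq_eval_oddPoly (i : ℕ) (x y : ℝ) :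
    U (2 * i) x y = ((evenPoly i).map (Int.castRingHom ℝ)).eval (x * y) ∧
      U (2 * i + 1) x y = 2 * x * ((oddPoly i).map (Int.castRingHom ℝ)).eval (x * y) := by
  induction i with
  | zero => simp [evenPoly, oddPoly, hU0, hU1]
  | succ n ih =>
    obtain ⟨hP, hQ⟩ := ih
    have hsub₁ : 2 * (n + 1) - 1 = 2 * n + 1 := by omega
    have hsub₂ : 2 * (n + 1) - 2 = 2 * n := by omega
    have hE : U (2 * (n + 1)) x y = ((evenPoly (n + 1)).map (Int.castRingHom ℝ)).eval (x * y) := by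
      rw [hUeven (n + 1) (by omega), hsub₁, hsub₂, hP, hQ, evenPoly]
      simp only [Polynomial.map_sub, Polynomial.map_mul, eval_sub, eval_mul, eval_X, eval_ofNat,
        Polynomial.map_ofNat, map_X]
      ring
    refine ⟨hE, ?_⟩
    rw [hUodd (n + 1) (by omega), hsub₁, hE, hQ, evenPoly, oddPoly]
    simp only [Polynomial.map_sub, Polynomial.map_mul, eval_sub, eval_mul, eval_X, eval_ofNat,
      Polynomial.map_ofNat, map_X]
    ring

end Recurrence

theorem stmt_9 (U : ℕ → ℝ → ℝ → ℝ)
    (hU0 : ∀ x y : ℝ, U 0 x y = 1)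
    (hU1 : ∀ x y : ℝ, U 1 x y = 2 * x)
    (hUeven : ∀ i : ℕ, 1 ≤ i → ∀ x y : ℝ,
      U (2 * i) x y = 2 * y * U (2 * i - 1) x y - U (2 * i - 2) x y)
    (hUodd : ∀ i : ℕ, 1 ≤ i → ∀ x y : ℝ,
      U (2 * i + 1) x y = 2 * x * U (2 * i) x y - U (2 * i - 1) x y) :
    ∀ i : ℕ, ∃ Q : Polynomial ℤ, Q.natDegree = i ∧ Q.leadingCoeff = 4 ^ i ∧
      ∀ x y : ℝ, U (2 * i + 1) x y = 2 * x * (Q.map (Int.castRingHom ℝ)).eval (x * y) :=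
  fun i => ⟨oddPoly i, natDegree_oddPoly i, leadingCoeff_oddPoly i, fun x y =>
    (eq_eval_evenPoly_and_eq_eval_oddPoly U hU0 hU1 hUeven hUodd i x y).2⟩
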